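/- (Ciarlet–Nečas) Let Ω ⊂ ℝⁿ be a bounded open set and let u : Ω → ℝⁿ be continuously differentiable with bounded image, with det ∇u(x) > 0 for every x ∈ Ω, and satisfying the Ciarlet–Nečas condition ∫_Ω det ∇u(x) dx ≤ |u(Ω)|, where |u(Ω)| is the n-dimensional Lebesgue measure of the image u(Ω). Then u is injective on Ω. -/

import Mathlib

open MeasureTheory Filter Topology Metric Bornology
open scoped ENNReal NNReal

noncomputable section

/-- The gradient of a map `u : ℝⁿ → ℝⁿ`, identified with an `n × n` matrix. -/
def grad {n : ℕ} (u : EuclideanSpace ℝ (Fin n) → EuclideanSpace ℝ (Fin n))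
    (x : EuclideanSpace ℝ (Fin n)) : Matrix (Fin n) (Fin n) ℝ :=
  Matrix.of fun i j => fderiv ℝ u x (EuclideanSpace.single j 1) i

/-!
Suppose `u a = u b` with `a ≠ b`, and let `B` be a small ball around `a` not containing `b`.
Since `u` is an open map on `Ω`, `u(B)` and `u(Ω \ B)` both contain a neighbourhood of
`u a`, so they overlap in a set of positive measure. The area formula bounds
`|u(Ω)| + |u(B) ∩ u(Ω \ B)| = |u(B)| + |u(Ω \ B)|` by `∫_Ω det ∇u`, which contradicts
the Ciarlet–Nečas condition because `|u(Ω)|` is finite.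
-/

theorem det_grad {n : ℕ} (u : EuclideanSpace ℝ (Fin n) → EuclideanSpace ℝ (Fin n))
    (x : EuclideanSpace ℝ (Fin n)) : (grad u x).det = (fderiv ℝ u x).det := by
  have h : grad u x = LinearMap.toMatrix (EuclideanSpace.basisFun (Fin n) ℝ).toBasis
      (EuclideanSpace.basisFun (Fin n) ℝ).toBasis (fderiv ℝ u x : _ →ₗ[ℝ] _) := by
    ext i j
    simp [grad, LinearMap.toMatrix_apply]
  rw [h, LinearMap.det_toMatrix]

section

variable {E : Type*} [NormedAddCommGroup E] [NormedSpace ℝ E] [FiniteDimensional ℝ E]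
  {f : E → E} {f' : E → E →L[ℝ] E} {s t : Set E}

theorem isOpen_image_of_hasStrictFDerivAt_of_det_ne_zero (hs : IsOpen s)
    (hf : ∀ x ∈ s, HasStrictFDerivAt f (f' x) x) (hdet : ∀ x ∈ s, (f' x).det ≠ 0) :
    IsOpen (f '' s) := by
  refine isOpen_iff_mem_nhds.2 ?_
  rintro _ ⟨x, hx, rfl⟩
  have hequiv : HasStrictFDerivAt f
      ((f' x).toContinuousLinearEquivOfDetNeZero (hdet x hx) : E →L[ℝ] E) x := by
    rw [ContinuousLinearMap.coe_toContinuousLinearEquivOfDetNeZero]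
    exact hf x hx
  rw [← hequiv.map_nhds_eq_of_equiv]
  exact image_mem_map (hs.mem_nhds hx)

variable [MeasurableSpace E] [BorelSpace E] (μ : Measure E) [μ.IsAddHaarMeasure]

theorem measure_image_add_measure_image_inter_le_lintegral_abs_det_fderiv
    (hs : MeasurableSet s) (ht : MeasurableSet t) (hts : t ⊆ s) (hft : MeasurableSet (f '' t))
    (hf' : ∀ x ∈ s, HasFDerivWithinAt f (f' x) s x) :
    μ (f '' s) + μ (f '' (s \ t) ∩ f '' t) ≤
      ∫⁻ x in s, ENNReal.ofReal |(f' x).det| ∂μ := by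
  have hs_eq : s \ t ∪ t = s := Set.sdiff_union_of_subset hts
  calc μ (f '' s) + μ (f '' (s \ t) ∩ f '' t)
      = μ (f '' (s \ t)) + μ (f '' t) := by
        rw [← measure_union_add_inter _ hft, ← Set.image_union, hs_eq]
    _ ≤ (∫⁻ x in s \ t, ENNReal.ofReal |(f' x).det| ∂μ) +
          ∫⁻ x in t, ENNReal.ofReal |(f' x).det| ∂μ :=
        add_le_add
          (addHaar_image_le_lintegral_abs_det_fderiv μ (hs.diff ht)
            fun x hx => (hf' x hx.1).mono Set.sdiff_subset)
          (addHaar_image_le_lintegral_abs_det_fderiv μ ht fun x hx => (hf' x (hts hx)).mono hts)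
    _ = ∫⁻ x in s, ENNReal.ofReal |(f' x).det| ∂μ := by
        rw [← lintegral_union ht Set.disjoint_sdiff_left, hs_eq]

theorem measure_image_diff_inter_image_eq_zero_of_lintegral_abs_det_fderiv_le
    (hs : MeasurableSet s) (ht : MeasurableSet t) (hts : t ⊆ s) (hft : MeasurableSet (f '' t))
    (hf' : ∀ x ∈ s, HasFDerivWithinAt f (f' x) s x) (hfin : μ (f '' s) ≠ ∞)
    (hle : ∫⁻ x in s, ENNReal.ofReal |(f' x).det| ∂μ ≤ μ (f '' s)) :
    μ (f '' (s \ t) ∩ f '' t) = 0 := by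
  have h := (measure_image_add_measure_image_inter_le_lintegral_abs_det_fderiv μ
    hs ht hts hft hf').trans hle
  exact nonpos_iff_eq_zero.1 <|
    ENNReal.le_of_add_le_add_left hfin (h.trans_eq (add_zero _).symm)

theorem injOn_of_lintegral_abs_det_fderiv_le (hs : IsOpen s)
    (hf : ∀ x ∈ s, HasStrictFDerivAt f (f' x) x) (hdet : ∀ x ∈ s, (f' x).det ≠ 0)
    (hfin : μ (f '' s) ≠ ∞)
    (hle : ∫⁻ x in s, ENNReal.ofReal |(f' x).det| ∂μ ≤ μ (f '' s)) :
    Set.InjOn f s := by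
  intro a ha b hb hab
  by_contra hne
  have himage_open : ∀ V ⊆ s, IsOpen V → IsOpen (f '' V) := fun V hV hVo =>
    isOpen_image_of_hasStrictFDerivAt_of_det_ne_zero hVo (fun x hx => hf x (hV hx))
      fun x hx => hdet x (hV hx)
  obtain ⟨ρ, hρ, hρs⟩ := Metric.isOpen_iff.1 hs a ha
  set r := min ρ (dist a b / 2)
  have hab_dist : 0 < dist a b := dist_pos.2 hne
  have hr : 0 < r := by positivity
  have has : ball a r ⊆ s := (ball_subset_ball (min_le_left _ _)).trans hρs
  have hbV : b ∈ s \ closedBall a r := ⟨hb, fun hba => by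
    have : dist a b ≤ dist a b / 2 := (mem_closedBall'.1 hba).trans (min_le_right _ _)
    linarith⟩
  have hzero := measure_image_diff_inter_image_eq_zero_of_lintegral_abs_det_fderiv_le μ
    hs.measurableSet measurableSet_ball has (himage_open _ has isOpen_ball).measurableSet
    (fun x hx => (hf x hx).hasFDerivAt.hasFDerivWithinAt) hfin hle
  have hpos : 0 < μ (f '' (s \ closedBall a r) ∩ f '' ball a r) :=
    ((himage_open _ Set.sdiff_subset (hs.sdiff isClosed_closedBall)).inter
      (himage_open _ has isOpen_ball)).measure_pos μ
      ⟨f a, ⟨b, hbV, hab.symm⟩, a, mem_ball_self hr, rfl⟩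
  refine hpos.ne' (measure_mono_null (Set.inter_subset_inter_left _ (Set.image_mono ?_)) hzero)
  exact Set.sdiff_subset_sdiff_right ball_subset_closedBall

end

theorem stmt12_general {n : ℕ} (Ω : Set (EuclideanSpace ℝ (Fin n)))
    (hΩo : IsOpen Ω)
    (u : EuclideanSpace ℝ (Fin n) → EuclideanSpace ℝ (Fin n))
    (hu : ContDiffOn ℝ 1 u Ω)
    (him : Bornology.IsBounded (u '' Ω))
    (hdet : ∀ x ∈ Ω, 0 < (grad u x).det)
    (hCN : (∫⁻ x in Ω, ENNReal.ofReal ((grad u x).det)) ≤ volume (u '' Ω)) :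
    Set.InjOn u Ω := by
  have hf : ∀ x ∈ Ω, HasStrictFDerivAt u (fderiv ℝ u x) x := fun x hx =>
    (hu.contDiffAt (hΩo.mem_nhds hx)).hasStrictFDerivAt one_ne_zero
  have hpos : ∀ x ∈ Ω, 0 < (fderiv ℝ u x).det := fun x hx => det_grad u x ▸ hdet x hx
  have hintegrand : ∫⁻ x in Ω, ENNReal.ofReal |(fderiv ℝ u x).det| =
      ∫⁻ x in Ω, ENNReal.ofReal (grad u x).det :=
    setLIntegral_congr_fun hΩo.measurableSet fun x hx => by
      rw [abs_of_pos (hpos x hx), det_grad]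
  exact injOn_of_lintegral_abs_det_fderiv_le volume hΩo hf (fun x hx => (hpos x hx).ne')
    him.measure_lt_top.ne (hintegrand.trans_le hCN)

/-- Ciarlet–Nečas: a `C¹` map `u` on a bounded open set `Ω ⊆ ℝⁿ` with bounded image,
everywhere positive Jacobian determinant and satisfying the Ciarlet–Nečas condition
`∫_Ω det ∇u ≤ |u(Ω)|` is injective on `Ω`. (The integral of the nonnegative Jacobian is
taken as a lower Lebesgue integral.) -/
theorem stmt12 {n : ℕ} (Ω : Set (EuclideanSpace ℝ (Fin n)))
    (hΩo : IsOpen Ω) (hΩb : Bornology.IsBounded Ω)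
    (u : EuclideanSpace ℝ (Fin n) → EuclideanSpace ℝ (Fin n))
    (hu : ContDiffOn ℝ 1 u Ω)
    (him : Bornology.IsBounded (u '' Ω))
    (hdet : ∀ x ∈ Ω, 0 < (grad u x).det)
    (hCN : (∫⁻ x in Ω, ENNReal.ofReal ((grad u x).det)) ≤ volume (u '' Ω)) :
    Set.InjOn u Ω :=
  stmt12_general Ω hΩo u hu him hdet hCN
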